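/- arXiv:2206.05360 — 2 statements merged into one kernel-verified Lean document; each statement's English description precedes it below -/
import Mathlib

section
/- (Germ regularity for the nonlinear Young integrand.) Let T > 0, γ = (γ₁,γ₂) ∈ (1/2,1]², η ∈ (0,1], α ∈ (0,1)², A ∈ C^γ_t C^{1+η}_x, y ∈ C^α([0,T]²;ℝ^d), and define Ξ_{s,t} := □_{s,t}A(y_s) for s ≤ t ∈ [0,T]². Then for all s ≤ u ≤ t: (i) |δ¹_u Ξ_{s,t}| ≤ ‖A‖_{C^γ_t C^{1}_x} [y]_{(1,0),α} |t₁−s₁|^{α₁+γ₁}|t₂−s₂|^{γ₂}; (ii) the analogous bound |δ²_u Ξ_{s,t}| ≤ ‖A‖_{C^γ_t C^{1}_x} [y]_{(0,1),α} |t₁−s₁|^{γ₁}|t₂−s₂|^{α₂+γ₂}; and (iii) there is a constant C = C(T) > 0 with |δ¹_u∘δ²_u Ξ_{s,t}| ≤ C‖A‖_{C^γ_t C^{1+η}_x} ( [y]_{(1,1),α} + [y]_{(1,0),α}([y]_{(1,0),α} + [y]_{(0,1),α})^η ) · m(t−s)^γ · ( m(t−s)^α + |t₁−s₁|^{α₁}|t₂−s₂|^{ηα₂}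 ). -/
open Set Filter MeasureTheory
open scoped Topology ENNReal NNReal

noncomputable section

namespace Plane

/-- The square `[0,T]²` in `ℝ × ℝ`, with the product (coordinatewise) order. -/
def Sq (T : ℝ) : Set (ℝ × ℝ) := Set.Icc (0, 0) (T, T)

variable {E : Type*} [NormedAddCommGroup E]

/-- The rectangular increment `□_{s,t} f`. -/
def box (f : ℝ × ℝ → E) (s t : ℝ × ℝ) : E :=
  f (t.1, t.2) - f (t.1, s.2) - f (s.1, t.2) + f (s.1, s.2)

/-- `m(t-s)^α = |t₁-s₁|^{α₁} |t₂-s₂|^{α₂}`. -/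
def mPow (α : ℝ × ℝ) (s t : ℝ × ℝ) : ℝ :=
  |t.1 - s.1| ^ α.1 * |t.2 - s.2| ^ α.2

/-- Values entering the `(1,0)` 2D Hölder semi-norm of `f` over the region `R`. -/
def hSet10 (R : Set (ℝ × ℝ)) (a : ℝ) (f : ℝ × ℝ → E) : Set ℝ :=
  {v | ∃ s ∈ R, ∃ t ∈ R, v = ‖f (t.1, s.2) - f (s.1, s.2)‖ / |t.1 - s.1| ^ a}

/-- Values entering the `(0,1)` 2D Hölder semi-norm of `f` over the region `R`. -/
def hSet01 (R : Set (ℝ × ℝ)) (a : ℝ) (f : ℝ × ℝ → E) : Set ℝ :=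
  {v | ∃ s ∈ R, ∃ t ∈ R, v = ‖f (s.1, t.2) - f (s.1, s.2)‖ / |t.2 - s.2| ^ a}

/-- Values entering the `(1,1)` (rectangular) 2D Hölder semi-norm of `f` over `R`. -/
def hSet11 (R : Set (ℝ × ℝ)) (α : ℝ × ℝ) (f : ℝ × ℝ → E) : Set ℝ :=
  {v | ∃ s ∈ R, ∃ t ∈ R, v = ‖box f s t‖ / mPow α s t}

/-- The `(1,0)` 2D Hölder semi-norm `[f]_{(1,0),α}` over `R`. -/
def semi10 (R : Set (ℝ × ℝ)) (a : ℝ) (f : ℝ × ℝ → E) : ℝ := sSup (hSet10 R a f)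

/-- The `(0,1)` 2D Hölder semi-norm `[f]_{(0,1),α}` over `R`. -/
def semi01 (R : Set (ℝ × ℝ)) (a : ℝ) (f : ℝ × ℝ → E) : ℝ := sSup (hSet01 R a f)

/-- The `(1,1)` 2D Hölder semi-norm `[f]_{(1,1),α}` over `R`. -/
def semi11 (R : Set (ℝ × ℝ)) (α : ℝ × ℝ) (f : ℝ × ℝ → E) : ℝ := sSup (hSet11 R α f)

/-- The full 2D Hölder semi-norm `[f]_α`. -/
def semiH (R : Set (ℝ × ℝ)) (α : ℝ × ℝ) (f : ℝ × ℝ → E) : ℝ :=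
  semi10 R α.1 f + semi01 R α.2 f + semi11 R α f

/-- Membership in the 2D Hölder space `C^α` over the region `R`:
the three semi-norms are finite. -/
def MemHolder (R : Set (ℝ × ℝ)) (α : ℝ × ℝ) (f : ℝ × ℝ → E) : Prop :=
  BddAbove (hSet10 R α.1 f) ∧ BddAbove (hSet01 R α.2 f) ∧ BddAbove (hSet11 R α f)

/-- A (one-dimensional) partition of `[a,b]` into consecutive subintervals. -/
structure Partition (a b : ℝ) where
  n : ℕ
  pts : Fin (n + 2) → ℝ
  mono : Monotone pts
  first : pts 0 = a
  last : pts (Fin.last (n + 1)) = b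

/-- The mesh (maximal subinterval length) of a partition. -/
def Partition.mesh {a b : ℝ} (P : Partition a b) : ℝ :=
  Finset.univ.sup' Finset.univ_nonempty fun i : Fin (P.n + 1) =>
    P.pts i.succ - P.pts i.castSucc

/-- The Riemann sum of a germ `Ξ` over a product partition `P × Q`. -/
def riemannSum (Ξ : ℝ × ℝ → ℝ × ℝ → E) {a₁ b₁ a₂ b₂ : ℝ}
    (P : Partition a₁ b₁) (Q : Partition a₂ b₂) : E :=
  ∑ i : Fin (P.n + 1), ∑ j : Fin (Q.n + 1),
    Ξ (P.pts i.castSucc, Q.pts j.castSucc) (P.pts i.succ, Q.pts j.succ)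

/-- The Riemann sums of the germ `Ξ` over the rectangle `[s,t]` converge to `L` along every
sequence of product partitions with mesh tending to `0`. -/
def SewsTo (Ξ : ℝ × ℝ → ℝ × ℝ → E) (s t : ℝ × ℝ) (L : E) : Prop :=
  ∀ (P : ℕ → Partition s.1 t.1) (Q : ℕ → Partition s.2 t.2),
    Tendsto (fun k => max (P k).mesh (Q k).mesh) atTop (𝓝 0) →
    Tendsto (fun k => riemannSum Ξ (P k) (Q k)) atTop (𝓝 L)

/-- `δ¹_u Ξ_{s,t}`. -/
def delta1 (Ξ : ℝ × ℝ → ℝ × ℝ → E) (s u t : ℝ × ℝ) : E :=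
  Ξ s t - Ξ s (u.1, t.2) - Ξ (u.1, s.2) t

/-- `δ²_u Ξ_{s,t}`. -/
def delta2 (Ξ : ℝ × ℝ → ℝ × ℝ → E) (s u t : ℝ × ℝ) : E :=
  Ξ s t - Ξ s (t.1, u.2) - Ξ (s.1, u.2) t

/-- `δ¹_u ∘ δ²_u Ξ_{s,t}`. -/
def delta12 (Ξ : ℝ × ℝ → ℝ × ℝ → E) (s u t : ℝ × ℝ) : E :=
  delta1 (fun a b => delta2 Ξ a u b) s u t

variable {X Y : Type*} [NormedAddCommGroup X] [NormedSpace ℝ X]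
  [NormedAddCommGroup Y] [NormedSpace ℝ Y]

/-- `‖g‖_{C^{1+η}_b} ≤ M`, with `g'` the derivative of `g`. -/
def SliceLE (η : ℝ) (g : X → Y) (g' : X → X →L[ℝ] Y) (M : ℝ) : Prop :=
  (∀ x, ‖g x‖ ≤ M) ∧ (∀ x, ‖g' x‖ ≤ M) ∧ ∀ x y, ‖g' x - g' y‖ ≤ M * ‖x - y‖ ^ η

/-- `A ∈ C^γ_t C^{1+η}_x` on `[0,T]²`, with norm at most `M`; `DA` is the spatial
derivative of `A`. -/
def MemCtC1 (T : ℝ) (γ : ℝ × ℝ) (η : ℝ)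
    (A : ℝ × ℝ → X → Y) (DA : ℝ × ℝ → X → X →L[ℝ] Y) (M : ℝ) : Prop :=
  (∀ t ∈ Sq T, ∀ x, HasFDerivAt (A t) (DA t x) x) ∧
  (∀ t ∈ Sq T, SliceLE η (A t) (DA t) M) ∧
  (∀ s ∈ Sq T, ∀ t ∈ Sq T,
    SliceLE η (fun x => A (t.1, s.2) x - A s x)
      (fun x => DA (t.1, s.2) x - DA s x) (M * |t.1 - s.1| ^ γ.1)) ∧
  (∀ s ∈ Sq T, ∀ t ∈ Sq T,
    SliceLE η (fun x => A (s.1, t.2) x - A s x)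
      (fun x => DA (s.1, t.2) x - DA s x) (M * |t.2 - s.2| ^ γ.2)) ∧
  (∀ s ∈ Sq T, ∀ t ∈ Sq T,
    SliceLE η (fun x => box (fun r => A r x) s t)
      (fun x => box (fun r => DA r x) s t) (M * mPow γ s t))

/-- `‖g‖_{C^{2+η}_b} ≤ M`, with `g'` and `g''` the first and second derivatives of `g`. -/
def Slice2LE (η : ℝ) (g : X → Y) (g' : X → X →L[ℝ] Y)
    (g'' : X → X →L[ℝ] X →L[ℝ] Y) (M : ℝ) : Prop :=
  (∀ x, ‖g x‖ ≤ M) ∧ (∀ x, ‖g' x‖ ≤ M) ∧ (∀ x, ‖g'' x‖ ≤ M) ∧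
    ∀ x y, ‖g'' x - g'' y‖ ≤ M * ‖x - y‖ ^ η

/-- `A ∈ C^γ_t C^{2+η}_x` on `[0,T]²`, with norm at most `M`; `DA`, `D2A` are the spatial
derivatives of `A`. -/
def MemCtC2 (T : ℝ) (γ : ℝ × ℝ) (η : ℝ) (A : ℝ × ℝ → X → Y)
    (DA : ℝ × ℝ → X → X →L[ℝ] Y) (D2A : ℝ × ℝ → X → X →L[ℝ] X →L[ℝ] Y)
    (M : ℝ) : Prop :=
  (∀ t ∈ Sq T, ∀ x, HasFDerivAt (A t) (DA t x) x) ∧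
  (∀ t ∈ Sq T, ∀ x, HasFDerivAt (DA t) (D2A t x) x) ∧
  (∀ t ∈ Sq T, Slice2LE η (A t) (DA t) (D2A t) M) ∧
  (∀ s ∈ Sq T, ∀ t ∈ Sq T,
    Slice2LE η (fun x => A (t.1, s.2) x - A s x)
      (fun x => DA (t.1, s.2) x - DA s x)
      (fun x => D2A (t.1, s.2) x - D2A s x) (M * |t.1 - s.1| ^ γ.1)) ∧
  (∀ s ∈ Sq T, ∀ t ∈ Sq T,
    Slice2LE η (fun x => A (s.1, t.2) x - A s x)
      (fun x => DA (s.1, t.2) x - DA s x)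
      (fun x => D2A (s.1, t.2) x - D2A s x) (M * |t.2 - s.2| ^ γ.2)) ∧
  (∀ s ∈ Sq T, ∀ t ∈ Sq T,
    Slice2LE η (fun x => box (fun r => A r x) s t)
      (fun x => box (fun r => DA r x) s t)
      (fun x => box (fun r => D2A r x) s t) (M * mPow γ s t))

/-- The germ `(s,t) ↦ □_{s,t} A(y_s)` of the 2D non-linear Young integral. -/
def nlyGerm (A : ℝ × ℝ → X → Y) (y : ℝ × ℝ → X) : ℝ × ℝ → ℝ × ℝ → Y :=
  fun s t => box (fun r => A r (y s)) s t



/-! ### Auxiliary lemmas -/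

section Aux

lemma mem_sq_mix {T : ℝ} {p q : ℝ × ℝ} (hp : p ∈ Sq T) (hq : q ∈ Sq T) :
    (p.1, q.2) ∈ Sq T := by
  simp only [Sq, Set.mem_Icc, Prod.le_def] at *
  exact ⟨⟨hp.1.1, hq.1.2⟩, ⟨hp.2.1, hq.2.2⟩⟩

lemma rpow_sub_mono1 {s u t e : ℝ} (h1 : s ≤ u) (h2 : u ≤ t) (he : 0 ≤ e) :
    |t - u| ^ e ≤ |t - s| ^ e :=
  Real.rpow_le_rpow (abs_nonneg _)
    (by rw [abs_of_nonneg (by linarith), abs_of_nonneg (by linarith)]; linarith) he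

lemma rpow_sub_mono2 {s u t e : ℝ} (h1 : s ≤ u) (h2 : u ≤ t) (he : 0 ≤ e) :
    |u - s| ^ e ≤ |t - s| ^ e :=
  Real.rpow_le_rpow (abs_nonneg _)
    (by rw [abs_of_nonneg (by linarith), abs_of_nonneg (by linarith)]; linarith) he

variable {F : Type*} [NormedAddCommGroup F]

lemma semi10_nonneg {R : Set (ℝ × ℝ)} {a : ℝ} {f : ℝ × ℝ → F}
    (hB : BddAbove (hSet10 R a f)) (hR : R.Nonempty) : 0 ≤ semi10 R a f := by
  obtain ⟨s, hs⟩ := hR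
  exact le_csSup hB ⟨s, hs, s, hs, by simp⟩

lemma semi01_nonneg {R : Set (ℝ × ℝ)} {a : ℝ} {f : ℝ × ℝ → F}
    (hB : BddAbove (hSet01 R a f)) (hR : R.Nonempty) : 0 ≤ semi01 R a f := by
  obtain ⟨s, hs⟩ := hR
  exact le_csSup hB ⟨s, hs, s, hs, by simp⟩

lemma semi11_nonneg {R : Set (ℝ × ℝ)} {α : ℝ × ℝ} {f : ℝ × ℝ → F}
    (hB : BddAbove (hSet11 R α f)) (hR : R.Nonempty) : 0 ≤ semi11 R α f := by
  obtain ⟨s, hs⟩ := hR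
  exact le_csSup hB ⟨s, hs, s, hs, by simp [box]⟩

lemma le_semi10 {R : Set (ℝ × ℝ)} {a : ℝ} {f : ℝ × ℝ → F}
    (hB : BddAbove (hSet10 R a f)) {s t : ℝ × ℝ} (hs : s ∈ R) (ht : t ∈ R)
    (ha : a ≠ 0) :
    ‖f (t.1, s.2) - f (s.1, s.2)‖ ≤ semi10 R a f * |t.1 - s.1| ^ a := by
  have hle := le_csSup hB ⟨s, hs, t, ht, rfl⟩
  rcases eq_or_ne t.1 s.1 with h | h
  · simp [h, Real.zero_rpow ha]
  · have hpos : (0:ℝ) < |t.1 - s.1| ^ a :=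
      Real.rpow_pos_of_pos (abs_pos.mpr (sub_ne_zero.mpr h)) a
    exact (div_le_iff₀ hpos).mp hle

lemma le_semi01 {R : Set (ℝ × ℝ)} {a : ℝ} {f : ℝ × ℝ → F}
    (hB : BddAbove (hSet01 R a f)) {s t : ℝ × ℝ} (hs : s ∈ R) (ht : t ∈ R)
    (ha : a ≠ 0) :
    ‖f (s.1, t.2) - f (s.1, s.2)‖ ≤ semi01 R a f * |t.2 - s.2| ^ a := by
  have hle := le_csSup hB ⟨s, hs, t, ht, rfl⟩
  rcases eq_or_ne t.2 s.2 with h | h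
  · simp [h, Real.zero_rpow ha]
  · have hpos : (0:ℝ) < |t.2 - s.2| ^ a :=
      Real.rpow_pos_of_pos (abs_pos.mpr (sub_ne_zero.mpr h)) a
    exact (div_le_iff₀ hpos).mp hle

lemma le_semi11 {R : Set (ℝ × ℝ)} {α : ℝ × ℝ} {f : ℝ × ℝ → F}
    (hB : BddAbove (hSet11 R α f)) {s t : ℝ × ℝ} (hs : s ∈ R) (ht : t ∈ R)
    (ha1 : α.1 ≠ 0) (ha2 : α.2 ≠ 0) :
    ‖box f s t‖ ≤ semi11 R α f * mPow α s t := by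
  have hle := le_csSup hB ⟨s, hs, t, ht, rfl⟩
  rcases eq_or_ne t.1 s.1 with h1 | h1
  · have hb : box f s t = 0 := by simp [box, h1]
    simp [hb, mPow, h1, Real.zero_rpow ha1]
  · rcases eq_or_ne t.2 s.2 with h2 | h2
    · have hb : box f s t = 0 := by simp [box, h2]
      simp [hb, mPow, h2, Real.zero_rpow ha2]
    · have hpos : (0:ℝ) < mPow α s t := by
        have p1 : (0:ℝ) < |t.1 - s.1| ^ α.1 :=
          Real.rpow_pos_of_pos (abs_pos.mpr (sub_ne_zero.mpr h1)) _
        have p2 : (0:ℝ) < |t.2 - s.2| ^ α.2 :=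
          Real.rpow_pos_of_pos (abs_pos.mpr (sub_ne_zero.mpr h2)) _
        exact mul_pos p1 p2
      exact (div_le_iff₀ hpos).mp hle

lemma mPow_nonneg (α s t : ℝ × ℝ) : (0:ℝ) ≤ mPow α s t := by
  unfold mPow; positivity

lemma mPow_mono {α : ℝ × ℝ} (hα1 : 0 ≤ α.1) (hα2 : 0 ≤ α.2) {s u t : ℝ × ℝ}
    (h1 : s ≤ u) (h2 : u ≤ t) : mPow α s u ≤ mPow α s t := by
  unfold mPow
  exact mul_le_mul (rpow_sub_mono2 h1.1 h2.1 hα1) (rpow_sub_mono2 h1.2 h2.2 hα2)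
    (Real.rpow_nonneg (abs_nonneg _) _) (Real.rpow_nonneg (abs_nonneg _) _)

variable {X' Y' : Type*} [NormedAddCommGroup X'] [NormedSpace ℝ X']
  [NormedAddCommGroup Y'] [NormedSpace ℝ Y']

lemma box_hasFDerivAt {T : ℝ} {A : ℝ × ℝ → X' → Y'} {DA : ℝ × ℝ → X' → X' →L[ℝ] Y'}
    (hA1 : ∀ t ∈ Sq T, ∀ x, HasFDerivAt (A t) (DA t x) x)
    {p q : ℝ × ℝ} (hp : p ∈ Sq T) (hq : q ∈ Sq T) (x : X') :
    HasFDerivAt (fun x => box (fun r => A r x) p q)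
      (box (fun r => DA r x) p q) x := by
  have h1 := hA1 q hq x
  have h2 := hA1 (q.1, p.2) (mem_sq_mix hq hp) x
  have h3 := hA1 (p.1, q.2) (mem_sq_mix hp hq) x
  have h4 := hA1 p hp x
  simpa only [box, Prod.mk.eta, Pi.sub_def, Pi.add_def] using ((h1.sub h2).sub h3).add h4

lemma box_lip {T : ℝ} {γ : ℝ × ℝ} {η M : ℝ} {A : ℝ × ℝ → X' → Y'}
    {DA : ℝ × ℝ → X' → X' →L[ℝ] Y'}
    (hA : MemCtC1 T γ η A DA M) {p q : ℝ × ℝ} (hp : p ∈ Sq T) (hq : q ∈ Sq T)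
    (x₁ x₂ : X') :
    ‖box (fun r => A r x₁) p q - box (fun r => A r x₂) p q‖ ≤
      M * mPow γ p q * ‖x₁ - x₂‖ := by
  have hb : ∀ x ∈ (Set.univ : Set X'),
      ‖box (fun r => DA r x) p q‖ ≤ M * mPow γ p q :=
    fun x _ => (hA.2.2.2.2 p hp q hq).2.1 x
  exact convex_univ.norm_image_sub_le_of_norm_hasFDerivWithin_le
    (fun x _ => (box_hasFDerivAt hA.1 hp hq x).hasFDerivWithinAt) hb
    (mem_univ x₂) (mem_univ x₁)

lemma delta1_eq {A : ℝ × ℝ → X' → Y'} {y : ℝ × ℝ → X'} (s u t : ℝ × ℝ) :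
    delta1 (nlyGerm A y) s u t =
      box (fun r => A r (y s)) (u.1, s.2) t -
        box (fun r => A r (y (u.1, s.2))) (u.1, s.2) t := by
  simp only [delta1, nlyGerm, box]
  abel

lemma delta2_eq {A : ℝ × ℝ → X' → Y'} {y : ℝ × ℝ → X'} (s u t : ℝ × ℝ) :
    delta2 (nlyGerm A y) s u t =
      box (fun r => A r (y s)) (s.1, u.2) t -
        box (fun r => A r (y (s.1, u.2))) (s.1, u.2) t := by
  simp only [delta2, nlyGerm, box]
  abel

lemma delta12_eq {A : ℝ × ℝ → X' → Y'} {y : ℝ × ℝ → X'} (s u t : ℝ × ℝ) :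
    delta12 (nlyGerm A y) s u t =
      box (fun r => A r (y s)) u t - box (fun r => A r (y (s.1, u.2))) u t -
        box (fun r => A r (y (u.1, s.2))) u t + box (fun r => A r (y u)) u t := by
  simp only [delta12, delta1, delta2, nlyGerm, box, Prod.mk.eta]
  abel

end Aux
/-- **Germ regularity for the nonlinear Young integrand.** -/
theorem nly_germ_regularity {d : ℕ} {T : ℝ} (hT : 0 < T)
    (γ α : ℝ × ℝ) (η : ℝ)
    (hγ1 : γ.1 ∈ Set.Ioc (1 / 2 : ℝ) 1) (hγ2 : γ.2 ∈ Set.Ioc (1 / 2 : ℝ) 1)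
    (hη : η ∈ Set.Ioc (0 : ℝ) 1)
    (hα1 : α.1 ∈ Set.Ioo (0 : ℝ) 1) (hα2 : α.2 ∈ Set.Ioo (0 : ℝ) 1)
    (A : ℝ × ℝ → EuclideanSpace ℝ (Fin d) → EuclideanSpace ℝ (Fin d))
    (DA : ℝ × ℝ → EuclideanSpace ℝ (Fin d) →
      EuclideanSpace ℝ (Fin d) →L[ℝ] EuclideanSpace ℝ (Fin d))
    (M : ℝ) (hM : 0 ≤ M) (hA : MemCtC1 T γ η A DA M)
    (y : ℝ × ℝ → EuclideanSpace ℝ (Fin d)) (hy : MemHolder (Sq T) α y) :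
    (∀ s ∈ Sq T, ∀ u ∈ Sq T, ∀ t ∈ Sq T, s ≤ u → u ≤ t →
      ‖delta1 (nlyGerm A y) s u t‖ ≤
        M * semi10 (Sq T) α.1 y * (|t.1 - s.1| ^ (α.1 + γ.1) * |t.2 - s.2| ^ γ.2)) ∧
    (∀ s ∈ Sq T, ∀ u ∈ Sq T, ∀ t ∈ Sq T, s ≤ u → u ≤ t →
      ‖delta2 (nlyGerm A y) s u t‖ ≤
        M * semi01 (Sq T) α.2 y * (|t.1 - s.1| ^ γ.1 * |t.2 - s.2| ^ (α.2 + γ.2))) ∧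
    ∃ C : ℝ, 0 < C ∧ ∀ s ∈ Sq T, ∀ u ∈ Sq T, ∀ t ∈ Sq T, s ≤ u → u ≤ t →
      ‖delta12 (nlyGerm A y) s u t‖ ≤
        C * M *
          (semi11 (Sq T) α y +
            semi10 (Sq T) α.1 y * (semi10 (Sq T) α.1 y + semi01 (Sq T) α.2 y) ^ η) *
          mPow γ s t * (mPow α s t + |t.1 - s.1| ^ α.1 * |t.2 - s.2| ^ (η * α.2)) := by

  have hγ1nn : (0:ℝ) ≤ γ.1 := by linarith [hγ1.1]
  have hγ2nn : (0:ℝ) ≤ γ.2 := by linarith [hγ2.1]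
  have hα1nn : (0:ℝ) ≤ α.1 := hα1.1.le
  have hα2nn : (0:ℝ) ≤ α.2 := hα2.1.le
  have hηnn : (0:ℝ) ≤ η := hη.1.le
  have hα1ne : α.1 ≠ 0 := ne_of_gt hα1.1
  have hα2ne : α.2 ≠ 0 := ne_of_gt hα2.1
  have hSqne : (Sq T).Nonempty := ⟨(0,0), by simp [Sq, Prod.le_def, hT.le]⟩
  obtain ⟨h10, h01, h11⟩ := hy
  have s10nn : 0 ≤ semi10 (Sq T) α.1 y := semi10_nonneg h10 hSqne
  have s01nn : 0 ≤ semi01 (Sq T) α.2 y := semi01_nonneg h01 hSqne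
  have s11nn : 0 ≤ semi11 (Sq T) α y := semi11_nonneg h11 hSqne
  refine ⟨?_, ?_, ?_⟩
  -- ### Part (i)
  · intro s hs u hu t ht hsu hut
    have hvS : ((u.1, s.2) : ℝ × ℝ) ∈ Sq T := mem_sq_mix hu hs
    rw [delta1_eq]
    have h1 := box_lip hA hvS ht (y s) (y (u.1, s.2))
    have h2 : ‖y s - y (u.1, s.2)‖ ≤ semi10 (Sq T) α.1 y * |u.1 - s.1| ^ α.1 := by
      have h := le_semi10 h10 hs hu hα1ne
      rw [norm_sub_rev] at h
      simpa only [Prod.mk.eta] using h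
    have hK : mPow γ (u.1, s.2) t ≤ |t.1 - s.1| ^ γ.1 * |t.2 - s.2| ^ γ.2 := by
      simp only [mPow]
      exact mul_le_mul_of_nonneg_right (rpow_sub_mono1 hsu.1 hut.1 hγ1nn)
        (Real.rpow_nonneg (abs_nonneg _) _)
    calc ‖box (fun r => A r (y s)) (u.1, s.2) t -
            box (fun r => A r (y (u.1, s.2))) (u.1, s.2) t‖
        ≤ M * mPow γ (u.1, s.2) t * ‖y s - y (u.1, s.2)‖ := h1
      _ ≤ M * (|t.1 - s.1| ^ γ.1 * |t.2 - s.2| ^ γ.2) *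
            (semi10 (Sq T) α.1 y * |t.1 - s.1| ^ α.1) := by
          refine mul_le_mul (mul_le_mul_of_nonneg_left hK hM)
            (h2.trans (mul_le_mul_of_nonneg_left
              (rpow_sub_mono2 hsu.1 hut.1 hα1nn) s10nn))
            (norm_nonneg _) (by positivity)
      _ = M * semi10 (Sq T) α.1 y *
            (|t.1 - s.1| ^ (α.1 + γ.1) * |t.2 - s.2| ^ γ.2) := by
          rw [Real.rpow_add' (abs_nonneg _) (by positivity)]
          ring
  -- ### Part (ii)
  · intro s hs u hu t ht hsu hut
    have hvS : ((s.1, u.2) : ℝ × ℝ) ∈ Sq T := mem_sq_mix hs hu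
    rw [delta2_eq]
    have h1 := box_lip hA hvS ht (y s) (y (s.1, u.2))
    have h2 : ‖y s - y (s.1, u.2)‖ ≤ semi01 (Sq T) α.2 y * |u.2 - s.2| ^ α.2 := by
      have h := le_semi01 h01 hs hu hα2ne
      rw [norm_sub_rev] at h
      simpa only [Prod.mk.eta] using h
    have hK : mPow γ (s.1, u.2) t ≤ |t.1 - s.1| ^ γ.1 * |t.2 - s.2| ^ γ.2 := by
      simp only [mPow]
      exact mul_le_mul_of_nonneg_left (rpow_sub_mono1 hsu.2 hut.2 hγ2nn)
        (Real.rpow_nonneg (abs_nonneg _) _)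
    calc ‖box (fun r => A r (y s)) (s.1, u.2) t -
            box (fun r => A r (y (s.1, u.2))) (s.1, u.2) t‖
        ≤ M * mPow γ (s.1, u.2) t * ‖y s - y (s.1, u.2)‖ := h1
      _ ≤ M * (|t.1 - s.1| ^ γ.1 * |t.2 - s.2| ^ γ.2) *
            (semi01 (Sq T) α.2 y * |t.2 - s.2| ^ α.2) := by
          refine mul_le_mul (mul_le_mul_of_nonneg_left hK hM)
            (h2.trans (mul_le_mul_of_nonneg_left
              (rpow_sub_mono2 hsu.2 hut.2 hα2nn) s01nn))
            (norm_nonneg _) (by positivity)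
      _ = M * semi01 (Sq T) α.2 y *
            (|t.1 - s.1| ^ γ.1 * |t.2 - s.2| ^ (α.2 + γ.2)) := by
          rw [Real.rpow_add' (abs_nonneg _) (by positivity)]
          ring
  -- ### Part (iii)
  · refine ⟨3, by norm_num, ?_⟩
    intro s hs u hu t ht hsu hut
    set S10 := semi10 (Sq T) α.1 y with hS10
    set S01 := semi01 (Sq T) α.2 y with hS01
    set S11 := semi11 (Sq T) α y with hS11
    have hbS : ((s.1, u.2) : ℝ × ℝ) ∈ Sq T := mem_sq_mix hs hu
    have hcS : ((u.1, s.2) : ℝ × ℝ) ∈ Sq T := mem_sq_mix hu hs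
    set a := y s with ha
    set b := y (s.1, u.2) with hb
    set c := y (u.1, s.2) with hc
    set dd := y u with hd
    set w := a - b - c + dd with hw
    set G : EuclideanSpace ℝ (Fin d) → EuclideanSpace ℝ (Fin d) :=
      fun x => box (fun r => A r x) u t with hG
    set DG : EuclideanSpace ℝ (Fin d) →
        EuclideanSpace ℝ (Fin d) →L[ℝ] EuclideanSpace ℝ (Fin d) :=
      fun x => box (fun r => DA r x) u t with hDG
    set K := M * mPow γ u t with hK
    have hGd : ∀ x, HasFDerivAt G (DG x) x := fun x => box_hasFDerivAt hA.1 hu ht x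
    have hSl := hA.2.2.2.2 u hu t ht
    have hDGle : ∀ x, ‖DG x‖ ≤ K := hSl.2.1
    have hDGh : ∀ x₁ x₂, ‖DG x₁ - DG x₂‖ ≤ K * ‖x₁ - x₂‖ ^ η := hSl.2.2
    have hKnn : 0 ≤ K := by rw [hK]; exact mul_nonneg hM (mPow_nonneg _ _ _)
    have hid : delta12 (nlyGerm A y) s u t = G a - G b - G c + G dd := by
      rw [delta12_eq]
    have hac : a - c = w + (b - dd) := by rw [hw]; abel
    set B := 2 * K * ‖w‖ + K * (‖c - dd‖ + ‖w‖) ^ η * ‖b - dd‖ with hB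
    have key : ‖G a - G b - G c + G dd - DG c w‖ ≤ B := by
      have hder : ∀ θ ∈ Icc (0:ℝ) 1,
          HasDerivWithinAt (fun θ : ℝ =>
              G (c + θ • (a - c)) - G (dd + θ • (b - dd)) - θ • (DG c w))
            (DG (c + θ • (a - c)) (a - c) - DG (dd + θ • (b - dd)) (b - dd) - DG c w)
            (Icc (0:ℝ) 1) θ := by
        intro θ _
        have p1 : HasDerivAt (fun θ : ℝ => c + θ • (a - c)) (a - c) θ := by
          simpa using ((hasDerivAt_id θ).smul_const (a - c)).const_add c
        have p2 : HasDerivAt (fun θ : ℝ => dd + θ • (b - dd)) (b - dd) θ := by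
          simpa using ((hasDerivAt_id θ).smul_const (b - dd)).const_add dd
        have p3 : HasDerivAt (fun θ : ℝ => θ • (DG c w)) (DG c w) θ := by
          simpa using (hasDerivAt_id θ).smul_const (DG c w)
        exact ((((hGd _).comp_hasDerivAt θ p1).sub
          ((hGd _).comp_hasDerivAt θ p2)).sub p3).hasDerivWithinAt
      have hbound : ∀ θ ∈ Icc (0:ℝ) 1,
          ‖DG (c + θ • (a - c)) (a - c) - DG (dd + θ • (b - dd)) (b - dd) - DG c w‖
            ≤ B := by
        intro θ hθ
        have hsplit : DG (c + θ • (a - c)) (a - c)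
            - DG (dd + θ • (b - dd)) (b - dd) - DG c w
            = (DG (c + θ • (a - c)) - DG c) w
              + (DG (c + θ • (a - c)) - DG (dd + θ • (b - dd))) (b - dd) := by
          rw [hac, map_add]
          simp only [ContinuousLinearMap.sub_apply]
          abel
        rw [hsplit]
        have n1 : ‖(DG (c + θ • (a - c)) - DG c) w‖ ≤ 2 * K * ‖w‖ :=
          calc ‖(DG (c + θ • (a - c)) - DG c) w‖
              ≤ ‖DG (c + θ • (a - c)) - DG c‖ * ‖w‖ :=
                ContinuousLinearMap.le_opNorm _ _
            _ ≤ (K + K) * ‖w‖ := mul_le_mul_of_nonneg_right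
                ((norm_sub_le _ _).trans (add_le_add (hDGle _) (hDGle _)))
                (norm_nonneg _)
            _ = 2 * K * ‖w‖ := by ring
        have hdiff : (c + θ • (a - c)) - (dd + θ • (b - dd)) = (c - dd) + θ • w := by
          rw [hac, smul_add]; abel
        have hn : ‖(c + θ • (a - c)) - (dd + θ • (b - dd))‖ ≤ ‖c - dd‖ + ‖w‖ := by
          rw [hdiff]
          refine (norm_add_le _ _).trans (add_le_add (le_refl _) ?_)
          rw [norm_smul, Real.norm_eq_abs, abs_of_nonneg hθ.1]
          exact mul_le_of_le_one_left (norm_nonneg _) hθ.2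
        have n2 : ‖(DG (c + θ • (a - c)) - DG (dd + θ • (b - dd))) (b - dd)‖
            ≤ K * (‖c - dd‖ + ‖w‖) ^ η * ‖b - dd‖ :=
          calc ‖(DG (c + θ • (a - c)) - DG (dd + θ • (b - dd))) (b - dd)‖
              ≤ ‖DG (c + θ • (a - c)) - DG (dd + θ • (b - dd))‖ * ‖b - dd‖ :=
                ContinuousLinearMap.le_opNorm _ _
            _ ≤ K * (‖c - dd‖ + ‖w‖) ^ η * ‖b - dd‖ := by
                refine mul_le_mul_of_nonneg_right ?_ (norm_nonneg _)
                refine (hDGh _ _).trans (mul_le_mul_of_nonneg_left ?_ hKnn)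
                exact Real.rpow_le_rpow (norm_nonneg _) hn hηnn
        rw [hB]
        exact (norm_add_le _ _).trans (add_le_add n1 n2)
      have hmvt := (convex_Icc (0:ℝ) 1).norm_image_sub_le_of_norm_hasDerivWithin_le
        hder hbound (left_mem_Icc.mpr zero_le_one) (right_mem_Icc.mpr zero_le_one)
      have heq : (G (c + (1:ℝ) • (a - c)) - G (dd + (1:ℝ) • (b - dd)) - (1:ℝ) • (DG c w))
          - (G (c + (0:ℝ) • (a - c)) - G (dd + (0:ℝ) • (b - dd)) - (0:ℝ) • (DG c w))
          = G a - G b - G c + G dd - DG c w := by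
        rw [show c + (1:ℝ) • (a - c) = a by rw [one_smul]; abel,
          show dd + (1:ℝ) • (b - dd) = b by rw [one_smul]; abel,
          show c + (0:ℝ) • (a - c) = c by rw [zero_smul, add_zero],
          show dd + (0:ℝ) • (b - dd) = dd by rw [zero_smul, add_zero],
          one_smul, zero_smul]
        abel
      rw [heq] at hmvt
      simpa using hmvt
    have hDGcw : ‖DG c w‖ ≤ K * ‖w‖ :=
      (ContinuousLinearMap.le_opNorm _ _).trans
        (mul_le_mul_of_nonneg_right (hDGle c) (norm_nonneg _))
    have main : ‖delta12 (nlyGerm A y) s u t‖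
        ≤ 3 * K * ‖w‖ + K * (‖c - dd‖ + ‖w‖) ^ η * ‖b - dd‖ := by
      rw [hid, show G a - G b - G c + G dd
        = (G a - G b - G c + G dd - DG c w) + DG c w by abel]
      refine (norm_add_le _ _).trans ?_
      have h := add_le_add key hDGcw
      rw [hB] at h
      linarith
    -- numeric estimates
    have hwb : ‖w‖ ≤ S11 * mPow α s t := by
      have hbox : w = box y s u := by
        rw [hw, ha, hb, hc, hd]; simp only [box, Prod.mk.eta]; abel
      rw [hbox, hS11]
      refine (le_semi11 h11 hs hu hα1ne hα2ne).trans ?_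
      exact mul_le_mul_of_nonneg_left (mPow_mono hα1nn hα2nn hsu hut) s11nn
    have hcd : ‖c - dd‖ ≤ S01 * |u.2 - s.2| ^ α.2 := by
      have h := le_semi01 h01 hcS hu hα2ne
      rw [norm_sub_rev] at h
      rw [hc, hd, hS01]
      simpa only [Prod.mk.eta] using h
    have hab : ‖a - b‖ ≤ S01 * |u.2 - s.2| ^ α.2 := by
      have h := le_semi01 h01 hs hu hα2ne
      rw [norm_sub_rev] at h
      rw [ha, hb, hS01]
      simpa only [Prod.mk.eta] using h
    have hbd : ‖b - dd‖ ≤ S10 * |u.1 - s.1| ^ α.1 := by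
      have h := le_semi10 h10 hbS hu hα1ne
      rw [norm_sub_rev] at h
      rw [hb, hd, hS10]
      simpa only [Prod.mk.eta] using h
    have hw2 : ‖w‖ ≤ 2 * (S01 * |u.2 - s.2| ^ α.2) := by
      rw [show w = (a - b) - (c - dd) by rw [hw]; abel]
      refine (norm_sub_le _ _).trans ?_
      linarith
    have hwηbase : ‖c - dd‖ + ‖w‖ ≤ 3 * (S01 * |u.2 - s.2| ^ α.2) := by linarith
    have hmono2 : |u.2 - s.2| ^ (η * α.2) ≤ |t.2 - s.2| ^ (η * α.2) :=
      rpow_sub_mono2 hsu.2 hut.2 (by positivity)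
    have hmono1 : |u.1 - s.1| ^ α.1 ≤ |t.1 - s.1| ^ α.1 :=
      rpow_sub_mono2 hsu.1 hut.1 hα1nn
    have hη3 : (‖c - dd‖ + ‖w‖) ^ η
        ≤ 3 * ((S10 + S01) ^ η * |t.2 - s.2| ^ (η * α.2)) := by
      calc (‖c - dd‖ + ‖w‖) ^ η
          ≤ (3 * (S01 * |u.2 - s.2| ^ α.2)) ^ η :=
            Real.rpow_le_rpow (by positivity) hwηbase hηnn
        _ = 3 ^ η * (S01 ^ η * (|u.2 - s.2| ^ α.2) ^ η) := by
            rw [Real.mul_rpow (by norm_num)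
                (mul_nonneg s01nn (Real.rpow_nonneg (abs_nonneg _) _)),
              Real.mul_rpow s01nn (Real.rpow_nonneg (abs_nonneg _) _)]
        _ ≤ 3 * ((S10 + S01) ^ η * |t.2 - s.2| ^ (η * α.2)) := by
            have h3 : (3:ℝ) ^ η ≤ 3 := by
              calc (3:ℝ) ^ η ≤ (3:ℝ) ^ (1:ℝ) :=
                    Real.rpow_le_rpow_of_exponent_le (by norm_num) hη.2
                _ = 3 := Real.rpow_one 3
            have hx : (|u.2 - s.2| ^ α.2) ^ η = |u.2 - s.2| ^ (η * α.2) := by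
              rw [← Real.rpow_mul (abs_nonneg _), mul_comm α.2 η]
            have hs01 : S01 ^ η ≤ (S10 + S01) ^ η :=
              Real.rpow_le_rpow s01nn (le_add_of_nonneg_left s10nn) hηnn
            have hfac : S01 ^ η * |u.2 - s.2| ^ (η * α.2)
                ≤ (S10 + S01) ^ η * |t.2 - s.2| ^ (η * α.2) :=
              mul_le_mul hs01 hmono2 (Real.rpow_nonneg (abs_nonneg _) _)
                (Real.rpow_nonneg (add_nonneg s10nn s01nn) _)
            rw [hx]
            calc (3:ℝ) ^ η * (S01 ^ η * |u.2 - s.2| ^ (η * α.2))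
                ≤ 3 * (S01 ^ η * |u.2 - s.2| ^ (η * α.2)) :=
                  mul_le_mul_of_nonneg_right h3
                    (mul_nonneg (Real.rpow_nonneg s01nn _)
                      (Real.rpow_nonneg (abs_nonneg _) _))
              _ ≤ 3 * ((S10 + S01) ^ η * |t.2 - s.2| ^ (η * α.2)) :=
                  mul_le_mul_of_nonneg_left hfac (by norm_num)
    have hKle : K ≤ M * mPow γ s t := by
      rw [hK]
      refine mul_le_mul_of_nonneg_left ?_ hM
      unfold mPow
      exact mul_le_mul (rpow_sub_mono1 hsu.1 hut.1 hγ1nn)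
        (rpow_sub_mono1 hsu.2 hut.2 hγ2nn) (by positivity) (by positivity)
    have hbd' : ‖b - dd‖ ≤ S10 * |t.1 - s.1| ^ α.1 :=
      hbd.trans (mul_le_mul_of_nonneg_left hmono1 s10nn)
    -- final assembly
    have hMγnn : (0:ℝ) ≤ M * mPow γ s t := mul_nonneg hM (mPow_nonneg _ _ _)
    have e1 : 3 * K * ‖w‖ ≤ 3 * (M * mPow γ s t) * (S11 * mPow α s t) := by
      have h := mul_le_mul hKle hwb (norm_nonneg _) hMγnn
      calc 3 * K * ‖w‖ = 3 * (K * ‖w‖) := by ring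
        _ ≤ 3 * (M * mPow γ s t * (S11 * mPow α s t)) :=
            mul_le_mul_of_nonneg_left h (by norm_num)
        _ = 3 * (M * mPow γ s t) * (S11 * mPow α s t) := by ring
    have e2 : K * (‖c - dd‖ + ‖w‖) ^ η * ‖b - dd‖
        ≤ (M * mPow γ s t) * (3 * ((S10 + S01) ^ η * |t.2 - s.2| ^ (η * α.2)))
          * (S10 * |t.1 - s.1| ^ α.1) := by
      refine mul_le_mul (mul_le_mul hKle hη3 (by positivity)
        (mul_nonneg hM (mPow_nonneg _ _ _))) hbd' (norm_nonneg _) ?_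
      exact mul_nonneg (mul_nonneg hM (mPow_nonneg _ _ _))
        (mul_nonneg (by norm_num)
          (mul_nonneg (Real.rpow_nonneg (add_nonneg s10nn s01nn) _)
            (Real.rpow_nonneg (abs_nonneg _) _)))
    have inner : S11 * mPow α s t
        + S10 * (S10 + S01) ^ η * (|t.1 - s.1| ^ α.1 * |t.2 - s.2| ^ (η * α.2))
        ≤ (S11 + S10 * (S10 + S01) ^ η)
          * (mPow α s t + |t.1 - s.1| ^ α.1 * |t.2 - s.2| ^ (η * α.2)) := by
      have q1 : (0:ℝ) ≤ (S10 + S01) ^ η :=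
        Real.rpow_nonneg (add_nonneg s10nn s01nn) η
      have q2 : (0:ℝ) ≤ |t.1 - s.1| ^ α.1 * |t.2 - s.2| ^ (η * α.2) :=
        mul_nonneg (Real.rpow_nonneg (abs_nonneg _) _)
          (Real.rpow_nonneg (abs_nonneg _) _)
      have expand : (S11 + S10 * (S10 + S01) ^ η)
          * (mPow α s t + |t.1 - s.1| ^ α.1 * |t.2 - s.2| ^ (η * α.2))
          = S11 * mPow α s t
            + S10 * (S10 + S01) ^ η * (|t.1 - s.1| ^ α.1 * |t.2 - s.2| ^ (η * α.2))
            + (S11 * (|t.1 - s.1| ^ α.1 * |t.2 - s.2| ^ (η * α.2))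
              + S10 * (S10 + S01) ^ η * mPow α s t) := by ring
      rw [expand]
      have r1 : (0:ℝ) ≤ S11 * (|t.1 - s.1| ^ α.1 * |t.2 - s.2| ^ (η * α.2)) :=
        mul_nonneg s11nn q2
      have r2 : (0:ℝ) ≤ S10 * (S10 + S01) ^ η * mPow α s t :=
        mul_nonneg (mul_nonneg s10nn q1) (mPow_nonneg α s t)
      linarith
    calc ‖delta12 (nlyGerm A y) s u t‖
        ≤ 3 * K * ‖w‖ + K * (‖c - dd‖ + ‖w‖) ^ η * ‖b - dd‖ := main
      _ ≤ 3 * (M * mPow γ s t) * (S11 * mPow α s t)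
          + (M * mPow γ s t) * (3 * ((S10 + S01) ^ η * |t.2 - s.2| ^ (η * α.2)))
            * (S10 * |t.1 - s.1| ^ α.1) := add_le_add e1 e2
      _ = 3 * (M * mPow γ s t) * (S11 * mPow α s t
          + S10 * (S10 + S01) ^ η
            * (|t.1 - s.1| ^ α.1 * |t.2 - s.2| ^ (η * α.2))) := by ring
      _ ≤ 3 * (M * mPow γ s t) * ((S11 + S10 * (S10 + S01) ^ η)
          * (mPow α s t + |t.1 - s.1| ^ α.1 * |t.2 - s.2| ^ (η * α.2))) :=
          mul_le_mul_of_nonneg_left inner (by linarith [hMγnn])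
      _ = 3 * M * (S11 + S10 * (S10 + S01) ^ η) * mPow γ s t
          * (mPow α s t + |t.1 - s.1| ^ α.1 * |t.2 - s.2| ^ (η * α.2)) := by ring

end Plane
end
end

section
/- (Consistency with the Riemann integral.) Let T > 0, γ ∈ (1/2,1]², η ∈ (0,1], α ∈ (0,1)² with αᵢη + γᵢ > 1 for i = 1,2, let A ∈ C^γ_t C^{1+η}_x and y ∈ C^α([0,T]²;ℝ^d). Suppose in addition that the mixed partial derivative ∂_{t₁}∂_{t₂}A(t,x) exists and is jointly continuous on [0,T]²×ℝ^d. Then for every t ∈ [0,T]², the 2D nonlinear Young integral equals the Riemann (Lebesgue) integral: ∫_0^t A(ds, y_s) = ∫_0^{t₁}∫_0^{t₂} ∂_{t₁}∂_{t₂}A((s₁,s₂), y_{(s₁,s₂)}) ds₂ ds₁. -/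
open Set Filter MeasureTheory
open scoped Topology ENNReal NNReal

noncomputable section

namespace Plane

variable {E : Type*} [NormedAddCommGroup E]

variable {X Y : Type*} [NormedAddCommGroup X] [NormedSpace ℝ X]
  [NormedAddCommGroup Y] [NormedSpace ℝ Y]

section AuxLemmas

lemma mem_Sq {T : ℝ} {p : ℝ × ℝ} : p ∈ Sq T ↔ p.1 ∈ Icc (0:ℝ) T ∧ p.2 ∈ Icc (0:ℝ) T := by
  constructor
  · intro h; exact ⟨⟨h.1.1, h.2.1⟩, h.1.2, h.2.2⟩
  · intro h; exact ⟨⟨h.1.1, h.2.1⟩, h.1.2, h.2.2⟩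

namespace Partition
variable {a b : ℝ} (P : Partition a b)

lemma pts_mem (i : Fin (P.n + 2)) : P.pts i ∈ Icc a b :=
  ⟨le_trans (le_of_eq P.first.symm) (P.mono (Fin.zero_le i)),
   le_trans (P.mono (Fin.le_last i)) (le_of_eq P.last)⟩

lemma diff_le_mesh (i : Fin (P.n + 1)) : P.pts i.succ - P.pts i.castSucc ≤ P.mesh :=
  Finset.le_sup' (fun i : Fin (P.n + 1) => P.pts i.succ - P.pts i.castSucc) (Finset.mem_univ i)

lemma castSucc_le_succ (i : Fin (P.n + 1)) : P.pts i.castSucc ≤ P.pts i.succ :=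
  P.mono (Fin.castSucc_le_succ i)

/-- The partition points as a function on `ℕ` (clamped at the right end). -/
def npts (i : ℕ) : ℝ := P.pts ⟨min i (P.n + 1), Nat.lt_succ_of_le (min_le_right _ _)⟩

lemma npts_castSucc (i : Fin (P.n + 1)) : P.npts i = P.pts i.castSucc := by
  unfold npts; congr 1
  exact Fin.ext (by simp [min_eq_left (Nat.le_of_lt_succ (Nat.lt_succ_of_lt i.isLt))])

lemma npts_succ (i : Fin (P.n + 1)) : P.npts (i + 1) = P.pts i.succ := by
  unfold npts; congr 1
  refine Fin.ext ?_
  show min ((i : ℕ) + 1) (P.n + 1) = ↑i.succ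
  simp [min_eq_left (Nat.succ_le_of_lt i.isLt)]

lemma npts_zero : P.npts 0 = a := by
  have : P.npts 0 = P.pts 0 := by unfold npts; congr 1
  rw [this, P.first]

lemma npts_last : P.npts (P.n + 1) = b := by
  have : P.npts (P.n + 1) = P.pts (Fin.last (P.n + 1)) := by
    unfold npts; congr 1; exact Fin.ext (by simp [Fin.last])
  rw [this, P.last]

lemma sum_diff : ∑ i : Fin (P.n + 1), (P.pts i.succ - P.pts i.castSucc) = b - a := by
  have h1 : (∑ i : Fin (P.n + 1), (P.pts i.succ - P.pts i.castSucc))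
      = ∑ i : Fin (P.n + 1), (P.npts (↑i + 1) - P.npts ↑i) :=
    Finset.sum_congr rfl fun i _ => by rw [npts_castSucc, npts_succ]
  rw [h1, Fin.sum_univ_eq_sum_range (fun k => P.npts (k + 1) - P.npts k),
    Finset.sum_range_sub, npts_zero, npts_last]

lemma integral_split {Y : Type*} [NormedAddCommGroup Y] [NormedSpace ℝ Y]
    {f : ℝ → Y} (hf : Continuous f) :
    ∑ i : Fin (P.n + 1), ∫ x in (P.pts i.castSucc)..(P.pts i.succ), f x
      = ∫ x in a..b, f x := by
  have h1 : (∑ i : Fin (P.n + 1), ∫ x in (P.pts i.castSucc)..(P.pts i.succ), f x)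
      = ∑ i : Fin (P.n + 1), ∫ x in (P.npts ↑i)..(P.npts (↑i + 1)), f x :=
    Finset.sum_congr rfl fun i _ => by rw [npts_castSucc, npts_succ]
  rw [h1, Fin.sum_univ_eq_sum_range (fun k => ∫ x in (P.npts k)..(P.npts (k + 1)), f x),
    intervalIntegral.sum_integral_adjacent_intervals
      (fun k _ => hf.intervalIntegrable _ _), npts_zero, npts_last]

end Partition

section NormedAux

variable {Z : Type*} [NormedAddCommGroup Z] [NormedSpace ℝ Z]

lemma normDoubleLe {f : ℝ → ℝ → Z} {a b c d C : ℝ} (hab : a ≤ b) (hcd : c ≤ d)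
    (hC : 0 ≤ C) (hbound : ∀ σ ∈ Icc a b, ∀ τ ∈ Icc c d, ‖f σ τ‖ ≤ C) :
    ‖∫ σ in a..b, ∫ τ in c..d, f σ τ‖ ≤ (b - a) * (d - c) * C := by
  have h1 : ∀ σ ∈ Set.uIoc a b, ‖∫ τ in c..d, f σ τ‖ ≤ C * |d - c| := by
    intro σ hσ
    have hσ' : σ ∈ Icc a b := mem_Icc_of_Ioc (by rwa [uIoc_of_le hab] at hσ)
    exact intervalIntegral.norm_integral_le_of_norm_le_const fun τ hτ =>
      hbound σ hσ' τ (mem_Icc_of_Ioc (by rwa [uIoc_of_le hcd] at hτ))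
  calc ‖∫ σ in a..b, ∫ τ in c..d, f σ τ‖ ≤ C * |d - c| * |b - a| :=
        intervalIntegral.norm_integral_le_of_norm_le_const h1
    _ = (b - a) * (d - c) * C := by
        rw [abs_of_nonneg (sub_nonneg.2 hcd), abs_of_nonneg (sub_nonneg.2 hab)]; ring

lemma holder_cont {T : ℝ} {α : ℝ × ℝ} (hα1 : 0 < α.1) (hα2 : 0 < α.2)
    {y : ℝ × ℝ → E} (h10 : BddAbove (hSet10 (Sq T) α.1 y))
    (h01 : BddAbove (hSet01 (Sq T) α.2 y)) :
    ContinuousOn y (Sq T) := by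
  obtain ⟨C1, hC1⟩ := h10
  obtain ⟨C2, hC2⟩ := h01
  rw [mem_upperBounds] at hC1 hC2
  have bound1 : ∀ s ∈ Sq T, ∀ t ∈ Sq T,
      ‖y (t.1, s.2) - y (s.1, s.2)‖ ≤ max C1 0 * |t.1 - s.1| ^ α.1 := by
    intro s hs t ht
    rcases eq_or_ne t.1 s.1 with h | h
    · rw [h, sub_self, norm_zero]
      positivity
    · have hpos : 0 < |t.1 - s.1| ^ α.1 :=
        Real.rpow_pos_of_pos (abs_pos.2 (sub_ne_zero.2 h)) _
      have hv : ‖y (t.1, s.2) - y (s.1, s.2)‖ / |t.1 - s.1| ^ α.1 ≤ C1 :=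
        hC1 _ ⟨s, hs, t, ht, rfl⟩
      calc ‖y (t.1, s.2) - y (s.1, s.2)‖
          = ‖y (t.1, s.2) - y (s.1, s.2)‖ / |t.1 - s.1| ^ α.1 * |t.1 - s.1| ^ α.1 :=
            (div_mul_cancel₀ _ hpos.ne').symm
        _ ≤ max C1 0 * |t.1 - s.1| ^ α.1 :=
            mul_le_mul_of_nonneg_right (hv.trans (le_max_left _ _)) hpos.le
  have bound2 : ∀ s ∈ Sq T, ∀ t ∈ Sq T,
      ‖y (s.1, t.2) - y (s.1, s.2)‖ ≤ max C2 0 * |t.2 - s.2| ^ α.2 := by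
    intro s hs t ht
    rcases eq_or_ne t.2 s.2 with h | h
    · rw [h, sub_self, norm_zero]
      positivity
    · have hpos : 0 < |t.2 - s.2| ^ α.2 :=
        Real.rpow_pos_of_pos (abs_pos.2 (sub_ne_zero.2 h)) _
      have hv : ‖y (s.1, t.2) - y (s.1, s.2)‖ / |t.2 - s.2| ^ α.2 ≤ C2 :=
        hC2 _ ⟨s, hs, t, ht, rfl⟩
      calc ‖y (s.1, t.2) - y (s.1, s.2)‖
          = ‖y (s.1, t.2) - y (s.1, s.2)‖ / |t.2 - s.2| ^ α.2 * |t.2 - s.2| ^ α.2 :=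
            (div_mul_cancel₀ _ hpos.ne').symm
        _ ≤ max C2 0 * |t.2 - s.2| ^ α.2 :=
            mul_le_mul_of_nonneg_right (hv.trans (le_max_left _ _)) hpos.le
  have key : ∀ s ∈ Sq T, ∀ t ∈ Sq T,
      ‖y t - y s‖ ≤ max C1 0 * |t.1 - s.1| ^ α.1 + max C2 0 * |t.2 - s.2| ^ α.2 := by
    intro s hs t ht
    have hmid : (s.1, t.2) ∈ Sq T := mem_Sq.2 ⟨(mem_Sq.1 hs).1, (mem_Sq.1 ht).2⟩
    have e1 := bound1 (s.1, t.2) hmid t ht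
    have e2 := bound2 s hs t ht
    simp only at e1 e2
    calc ‖y t - y s‖ = ‖(y (t.1, t.2) - y (s.1, t.2)) + (y (s.1, t.2) - y (s.1, s.2))‖ := by
          rw [Prod.mk.eta]; abel_nf
      _ ≤ ‖y (t.1, t.2) - y (s.1, t.2)‖ + ‖y (s.1, t.2) - y (s.1, s.2)‖ := norm_add_le _ _
      _ ≤ max C1 0 * |t.1 - s.1| ^ α.1 + max C2 0 * |t.2 - s.2| ^ α.2 := add_le_add e1 e2
  intro s hs
  have hb : Tendsto (fun t : ℝ × ℝ =>
      max C1 0 * |t.1 - s.1| ^ α.1 + max C2 0 * |t.2 - s.2| ^ α.2) (𝓝 s) (𝓝 0) := by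
    have l1 : Tendsto (fun t : ℝ × ℝ => |t.1 - s.1|) (𝓝 s) (𝓝 0) := by
      have hc : Continuous fun t : ℝ × ℝ => |t.1 - s.1| := by fun_prop
      simpa using hc.tendsto s
    have l2 : Tendsto (fun t : ℝ × ℝ => |t.2 - s.2|) (𝓝 s) (𝓝 0) := by
      have hc : Continuous fun t : ℝ × ℝ => |t.2 - s.2| := by fun_prop
      simpa using hc.tendsto s
    have r1 : Tendsto (fun t : ℝ × ℝ => |t.1 - s.1| ^ α.1) (𝓝 s) (𝓝 0) := by
      have hc : ContinuousAt (fun x : ℝ => x ^ α.1) 0 :=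
        Real.continuousAt_rpow_const 0 α.1 (Or.inr hα1.le)
      have := hc.tendsto.comp l1
      simpa [Function.comp_def, Real.zero_rpow hα1.ne'] using this
    have r2 : Tendsto (fun t : ℝ × ℝ => |t.2 - s.2| ^ α.2) (𝓝 s) (𝓝 0) := by
      have hc : ContinuousAt (fun x : ℝ => x ^ α.2) 0 :=
        Real.continuousAt_rpow_const 0 α.2 (Or.inr hα2.le)
      have := hc.tendsto.comp l2
      simpa [Function.comp_def, Real.zero_rpow hα2.ne'] using this
    have := (r1.const_mul (max C1 0)).add (r2.const_mul (max C2 0))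
    simpa using this
  have h0 : Tendsto (fun t => y t - y s) (𝓝[Sq T] s) (𝓝 0) := by
    apply squeeze_zero_norm' _ (hb.mono_left nhdsWithin_le_nhds)
    filter_upwards [self_mem_nhdsWithin] with t ht
    exact key s hs t ht
  have h2 : Tendsto y (𝓝[Sq T] s) (𝓝 (y s)) := by
    have := h0.add_const (y s)
    simpa using this
  exact h2

end NormedAux

section BoxEq

variable [NormedSpace ℝ X] [NormedSpace ℝ Y]

lemma boxEq [CompleteSpace Y] {T : ℝ} {A A₂ : ℝ × ℝ → X → Y} {Bt : (ℝ × ℝ) × X → Y}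
    (hA₂ : ∀ p ∈ Sq T, ∀ x, HasDerivAt (fun τ => A (p.1, τ) x) (A₂ p x) p.2)
    (hB : ∀ p ∈ Sq T, ∀ x, HasDerivAt (fun τ => A₂ (τ, p.2) x) (Bt (p, x)) p.1)
    (hBt : Continuous Bt)
    {u v : ℝ × ℝ} (hu : u ∈ Sq T) (hv : v ∈ Sq T) (huv : u ≤ v) (x : X) :
    box (fun r => A r x) u v = ∫ σ in u.1..v.1, ∫ τ in u.2..v.2, Bt ((σ, τ), x) := by
  obtain ⟨hu1, hu2⟩ := mem_Sq.1 hu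
  obtain ⟨hv1, hv2⟩ := mem_Sq.1 hv
  have hsub1 : uIcc u.1 v.1 ⊆ Icc (0:ℝ) T := by
    rw [uIcc_of_le huv.1]; exact Icc_subset_Icc hu1.1 hv1.2
  have hsub2 : uIcc u.2 v.2 ⊆ Icc (0:ℝ) T := by
    rw [uIcc_of_le huv.2]; exact Icc_subset_Icc hu2.1 hv2.2
  have step1 : ∀ τ ∈ Icc (0:ℝ) T,
      (∫ σ in u.1..v.1, Bt ((σ, τ), x)) = A₂ (v.1, τ) x - A₂ (u.1, τ) x := by
    intro τ hτ
    apply intervalIntegral.integral_eq_sub_of_hasDerivAt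
      (f := fun σ => A₂ (σ, τ) x) (f' := fun σ => Bt ((σ, τ), x))
    · intro σ hσ
      exact hB (σ, τ) (mem_Sq.2 ⟨hsub1 hσ, hτ⟩) x
    · exact (hBt.comp
        (by fun_prop : Continuous fun σ : ℝ => ((σ, τ), x))).intervalIntegrable _ _
  have hcont : Continuous fun τ => ∫ σ in u.1..v.1, Bt ((σ, τ), x) := by
    apply intervalIntegral.continuous_parametric_intervalIntegral_of_continuous'
    exact hBt.comp (by fun_prop)
  have step2 : (∫ τ in u.2..v.2, ∫ σ in u.1..v.1, Bt ((σ, τ), x))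
      = (A (v.1, v.2) x - A (u.1, v.2) x) - (A (v.1, u.2) x - A (u.1, u.2) x) := by
    apply intervalIntegral.integral_eq_sub_of_hasDerivAt
      (f := fun τ => A (v.1, τ) x - A (u.1, τ) x)
      (f' := fun τ => ∫ σ in u.1..v.1, Bt ((σ, τ), x))
    · intro τ hτ
      have hτT : τ ∈ Icc (0:ℝ) T := hsub2 hτ
      have h1 := hA₂ (v.1, τ) (mem_Sq.2 ⟨hv1, hτT⟩) x
      have h2 := hA₂ (u.1, τ) (mem_Sq.2 ⟨hu1, hτT⟩) x
      have := h1.sub h2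
      rwa [← step1 τ hτT] at this
    · exact hcont.intervalIntegrable _ _
  have step3 : box (fun r => A r x) u v
      = (A (v.1, v.2) x - A (u.1, v.2) x) - (A (v.1, u.2) x - A (u.1, u.2) x) := by
    simp only [box]; abel
  rw [step3, ← step2]
  have hf : Continuous (Function.uncurry fun σ τ => Bt ((σ, τ), x)) := hBt.comp (by fun_prop)
  have hint : Integrable (Function.uncurry fun τ σ => Bt ((σ, τ), x))
      ((volume.restrict (Ioc u.2 v.2)).prod (volume.restrict (Ioc u.1 v.1))) := by
    rw [Measure.prod_restrict]
    have h1 : IntegrableOn (Function.uncurry fun τ σ => Bt ((σ, τ), x))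
        (Icc u.2 v.2 ×ˢ Icc u.1 v.1) (volume.prod volume) := by
      apply ContinuousOn.integrableOn_compact (isCompact_Icc.prod isCompact_Icc)
      exact (hf.comp continuous_swap).continuousOn
    exact h1.mono_set (Set.prod_mono Ioc_subset_Icc_self Ioc_subset_Icc_self)
  simp only [intervalIntegral.integral_of_le huv.1, intervalIntegral.integral_of_le huv.2]
  exact MeasureTheory.integral_integral_swap hint

lemma boxEq' [CompleteSpace Y] {T : ℝ} {A A₂ : ℝ × ℝ → X → Y} {Bt : (ℝ × ℝ) × X → Y}
    (hA₂ : ∀ p ∈ Sq T, ∀ x, HasDerivAt (fun τ => A (p.1, τ) x) (A₂ p x) p.2)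
    (hB : ∀ p ∈ Sq T, ∀ x, HasDerivAt (fun τ => A₂ (τ, p.2) x) (Bt (p, x)) p.1)
    (hBt : Continuous Bt)
    {u1 u2 v1 v2 : ℝ} (hu1 : u1 ∈ Icc (0:ℝ) T) (hu2 : u2 ∈ Icc (0:ℝ) T)
    (hv1 : v1 ∈ Icc (0:ℝ) T) (hv2 : v2 ∈ Icc (0:ℝ) T)
    (h1 : u1 ≤ v1) (h2 : u2 ≤ v2) (x : X) :
    box (fun r => A r x) (u1, u2) (v1, v2)
      = ∫ σ in u1..v1, ∫ τ in u2..v2, Bt ((σ, τ), x) :=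
  boxEq hA₂ hB hBt (u := (u1, u2)) (v := (v1, v2))
    (mem_Sq.2 ⟨hu1, hu2⟩) (mem_Sq.2 ⟨hv1, hv2⟩) ⟨h1, h2⟩ x

end BoxEq

end AuxLemmas

/-- **Consistency of the 2D nonlinear Young integral with the Riemann
integral.** Here `A₂ = ∂_{t₂} A` and `B = ∂_{t₁}∂_{t₂} A`. -/
theorem nly_integral_consistency {d : ℕ} {T : ℝ} (hT : 0 < T)
    (γ α : ℝ × ℝ) (η : ℝ)
    (hγ1 : γ.1 ∈ Set.Ioc (1 / 2 : ℝ) 1) (hγ2 : γ.2 ∈ Set.Ioc (1 / 2 : ℝ) 1)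
    (hη : η ∈ Set.Ioc (0 : ℝ) 1)
    (hα1 : α.1 ∈ Set.Ioo (0 : ℝ) 1) (hα2 : α.2 ∈ Set.Ioo (0 : ℝ) 1)
    (hαγ1 : 1 < α.1 * η + γ.1) (hαγ2 : 1 < α.2 * η + γ.2)
    (A A₂ B : ℝ × ℝ → EuclideanSpace ℝ (Fin d) → EuclideanSpace ℝ (Fin d))
    (DA : ℝ × ℝ → EuclideanSpace ℝ (Fin d) →
      EuclideanSpace ℝ (Fin d) →L[ℝ] EuclideanSpace ℝ (Fin d))
    (M : ℝ) (hM : 0 ≤ M) (hA : MemCtC1 T γ η A DA M)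
    (hA₂ : ∀ p ∈ Sq T, ∀ x, HasDerivAt (fun τ => A (p.1, τ) x) (A₂ p x) p.2)
    (hB : ∀ p ∈ Sq T, ∀ x, HasDerivAt (fun τ => A₂ (τ, p.2) x) (B p x) p.1)
    (hBcont : ContinuousOn (fun q : (ℝ × ℝ) × EuclideanSpace ℝ (Fin d) => B q.1 q.2)
      (Sq T ×ˢ (Set.univ : Set (EuclideanSpace ℝ (Fin d)))))
    (y : ℝ × ℝ → EuclideanSpace ℝ (Fin d)) (hy : MemHolder (Sq T) α y) :
    ∀ t ∈ Sq T,
      SewsTo (nlyGerm A y) (0, 0) t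
        (∫ r₁ in (0 : ℝ)..t.1, ∫ r₂ in (0 : ℝ)..t.2, B (r₁, r₂) (y (r₁, r₂))) := by
  have hT0 : (0:ℝ) ≤ T := hT.le
  -- continuity of `y` on the square
  have hycont : ContinuousOn y (Sq T) := holder_cont hα1.1 hα2.1 hy.1 hy.2.1
  -- a continuous retraction of the plane onto the square
  have hprojcont : Continuous
      (fun r : ℝ × ℝ => ((max 0 (min r.1 T), max 0 (min r.2 T)) : ℝ × ℝ)) := by fun_prop
  set proj : ℝ × ℝ → ℝ × ℝ := fun r => (max 0 (min r.1 T), max 0 (min r.2 T)) with hprojdef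
  have hprojmem : ∀ r, proj r ∈ Sq T := fun r => mem_Sq.2
    ⟨⟨le_max_left _ _, max_le hT0 (min_le_right _ _)⟩,
     ⟨le_max_left _ _, max_le hT0 (min_le_right _ _)⟩⟩
  have hprojid : ∀ r ∈ Sq T, proj r = r := by
    intro r hr
    obtain ⟨h1, h2⟩ := mem_Sq.1 hr
    show ((max 0 (min r.1 T), max 0 (min r.2 T)) : ℝ × ℝ) = r
    rw [min_eq_left h1.2, max_eq_right h1.1, min_eq_left h2.2, max_eq_right h2.1]
  set yt : ℝ × ℝ → EuclideanSpace ℝ (Fin d) := fun r => y (proj r) with hytdef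
  have hytcont : Continuous yt := hycont.comp_continuous hprojcont hprojmem
  have hyteq : ∀ r ∈ Sq T, yt r = y r := fun r hr => by
    show y (proj r) = y r; rw [hprojid r hr]
  -- Tietze extension of `B`
  have hclosed : IsClosed ((Sq T) ×ˢ (univ : Set (EuclideanSpace ℝ (Fin d)))) :=
    isClosed_Icc.prod isClosed_univ
  obtain ⟨Btc, hBtc⟩ := ContinuousMap.exists_restrict_eq hclosed
    (ContinuousMap.mk _ hBcont.restrict)
  have heqB : ∀ p ∈ Sq T, ∀ x, Btc (p, x) = B p x := by
    intro p hp x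
    simpa using congrFun (congrArg DFunLike.coe hBtc) ⟨(p, x), ⟨hp, mem_univ x⟩⟩
  have hB' : ∀ p ∈ Sq T, ∀ x,
      HasDerivAt (fun τ => A₂ (τ, p.2) x) (Btc (p, x)) p.1 := by
    intro p hp x
    rw [heqB p hp x]; exact hB p hp x
  set G : (ℝ × ℝ) × (ℝ × ℝ) → EuclideanSpace ℝ (Fin d) :=
    fun q => Btc (q.1, yt q.2) with hGdef
  have hGcont : Continuous G :=
    Btc.continuous.comp (continuous_fst.prodMk (hytcont.comp continuous_snd))
  have hGy : ∀ r ∈ Sq T, ∀ u ∈ Sq T, G (r, u) = B r (y u) := by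
    intro r hr u hu
    show Btc (r, yt u) = B r (y u)
    rw [hyteq u hu, heqB r hr]
  -- uniform continuity of `G` on the compact square-of-squares
  have hGuc := (isCompact_Icc.prod isCompact_Icc :
      IsCompact ((Sq T) ×ˢ (Sq T))).uniformContinuousOn_of_continuous hGcont.continuousOn
  rw [Metric.uniformContinuousOn_iff] at hGuc
  intro t ht
  obtain ⟨ht1, ht2⟩ := mem_Sq.1 ht
  intro P Q hmesh
  rw [Metric.tendsto_atTop]
  intro ε hε
  have hden : (0:ℝ) < T * T + 1 := by positivity
  set ε' : ℝ := ε / (T * T + 1) with hε'def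
  have hε' : 0 < ε' := div_pos hε hden
  obtain ⟨δ, hδpos, hδ⟩ := hGuc ε' hε'
  have hev : ∀ᶠ k in atTop, max (P k).mesh (Q k).mesh < δ :=
    hmesh.eventually_lt_const hδpos
  obtain ⟨N, hN⟩ := eventually_atTop.1 hev
  refine ⟨N, fun k hk => ?_⟩
  have hmk := hN k hk
  have hmP : (P k).mesh < δ := lt_of_le_of_lt (le_max_left _ _) hmk
  have hmQ : (Q k).mesh < δ := lt_of_le_of_lt (le_max_right _ _) hmk
  have hmemP : ∀ i : Fin ((P k).n + 2), (P k).pts i ∈ Icc (0:ℝ) T :=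
    fun i => Icc_subset_Icc le_rfl ht1.2 ((P k).pts_mem i)
  have hmemQ : ∀ i : Fin ((Q k).n + 2), (Q k).pts i ∈ Icc (0:ℝ) T :=
    fun i => Icc_subset_Icc le_rfl ht2.2 ((Q k).pts_mem i)
  -- the Riemann sum as a double integral
  have hSeq : riemannSum (nlyGerm A y) (P k) (Q k)
      = ∑ i : Fin ((P k).n + 1), ∑ j : Fin ((Q k).n + 1),
          ∫ σ in ((P k).pts i.castSucc)..((P k).pts i.succ),
            ∫ τ in ((Q k).pts j.castSucc)..((Q k).pts j.succ),
              G ((σ, τ), ((P k).pts i.castSucc, (Q k).pts j.castSucc)) := by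
    unfold riemannSum
    simp only [nlyGerm]
    refine Finset.sum_congr rfl fun i _ => Finset.sum_congr rfl fun j _ => ?_
    have hu : (((P k).pts i.castSucc, (Q k).pts j.castSucc) : ℝ × ℝ) ∈ Sq T :=
      mem_Sq.2 ⟨hmemP _, hmemQ _⟩
    have hb := boxEq' hA₂ hB' Btc.continuous (hmemP i.castSucc) (hmemQ j.castSucc)
      (hmemP i.succ) (hmemQ j.succ) ((P k).castSucc_le_succ i) ((Q k).castSucc_le_succ j)
      (y ((P k).pts i.castSucc, (Q k).pts j.castSucc))
    rw [hb]
    have hyy : yt (((P k).pts i.castSucc, (Q k).pts j.castSucc) : ℝ × ℝ)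
        = y (((P k).pts i.castSucc, (Q k).pts j.castSucc) : ℝ × ℝ) := hyteq _ hu
    simp only [hGdef]
    rw [hyy]
  -- the limit as a double sum of cell integrals
  have hLeq : (∫ r₁ in (0:ℝ)..t.1, ∫ r₂ in (0:ℝ)..t.2, B (r₁, r₂) (y (r₁, r₂)))
      = ∑ i : Fin ((P k).n + 1), ∑ j : Fin ((Q k).n + 1),
          ∫ σ in ((P k).pts i.castSucc)..((P k).pts i.succ),
            ∫ τ in ((Q k).pts j.castSucc)..((Q k).pts j.succ), G ((σ, τ), (σ, τ)) := by
    have hcongr : (∫ r₁ in (0:ℝ)..t.1, ∫ r₂ in (0:ℝ)..t.2, B (r₁, r₂) (y (r₁, r₂)))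
        = ∫ σ in (0:ℝ)..t.1, ∫ τ in (0:ℝ)..t.2, G ((σ, τ), (σ, τ)) := by
      apply intervalIntegral.integral_congr
      intro σ hσ
      have hσ' : σ ∈ Icc (0:ℝ) T := by
        rw [uIcc_of_le ht1.1] at hσ; exact ⟨hσ.1, hσ.2.trans ht1.2⟩
      apply intervalIntegral.integral_congr
      intro τ hτ
      have hτ' : τ ∈ Icc (0:ℝ) T := by
        rw [uIcc_of_le ht2.1] at hτ; exact ⟨hτ.1, hτ.2.trans ht2.2⟩
      exact (hGy (σ, τ) (mem_Sq.2 ⟨hσ', hτ'⟩) (σ, τ) (mem_Sq.2 ⟨hσ', hτ'⟩)).symm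
    rw [hcongr]
    have hFcont : Continuous fun σ : ℝ => ∫ τ in (0:ℝ)..t.2, G ((σ, τ), (σ, τ)) := by
      apply intervalIntegral.continuous_parametric_intervalIntegral_of_continuous'
      exact hGcont.comp (by fun_prop)
    have hsplit : (∫ σ in (0:ℝ)..t.1, ∫ τ in (0:ℝ)..t.2, G ((σ, τ), (σ, τ)))
        = ∑ i : Fin ((P k).n + 1),
            ∫ σ in ((P k).pts i.castSucc)..((P k).pts i.succ),
              ∫ τ in (0:ℝ)..t.2, G ((σ, τ), (σ, τ)) :=
      ((P k).integral_split hFcont).symm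
    rw [hsplit]
    refine Finset.sum_congr rfl fun i _ => ?_
    have hinner : ∀ σ : ℝ, (∫ τ in (0:ℝ)..t.2, G ((σ, τ), (σ, τ)))
        = ∑ j : Fin ((Q k).n + 1),
            ∫ τ in ((Q k).pts j.castSucc)..((Q k).pts j.succ), G ((σ, τ), (σ, τ)) :=
      fun σ => ((Q k).integral_split (hGcont.comp (by fun_prop))).symm
    simp only [hinner]
    rw [intervalIntegral.integral_finset_sum]
    intro j _
    refine (intervalIntegral.continuous_parametric_intervalIntegral_of_continuous'
      (f := fun (σ τ : ℝ) => G ((σ, τ), (σ, τ))) ?_ _ _).intervalIntegrable _ _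
    exact hGcont.comp ((continuous_fst.prodMk continuous_snd).prodMk
      (continuous_fst.prodMk continuous_snd))
  -- per-cell estimate
  have cell : ∀ (i : Fin ((P k).n + 1)) (j : Fin ((Q k).n + 1)),
      ‖(∫ σ in ((P k).pts i.castSucc)..((P k).pts i.succ),
          ∫ τ in ((Q k).pts j.castSucc)..((Q k).pts j.succ),
            G ((σ, τ), ((P k).pts i.castSucc, (Q k).pts j.castSucc)))
        - ∫ σ in ((P k).pts i.castSucc)..((P k).pts i.succ),
            ∫ τ in ((Q k).pts j.castSucc)..((Q k).pts j.succ), G ((σ, τ), (σ, τ))‖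
      ≤ ((P k).pts i.succ - (P k).pts i.castSucc)
          * (((Q k).pts j.succ - (Q k).pts j.castSucc) * ε') := by
    intro i j
    have hab : (P k).pts i.castSucc ≤ (P k).pts i.succ := (P k).castSucc_le_succ i
    have hcd : (Q k).pts j.castSucc ≤ (Q k).pts j.succ := (Q k).castSucc_le_succ j
    have hcont1 : Continuous fun σ : ℝ =>
        ∫ τ in ((Q k).pts j.castSucc)..((Q k).pts j.succ),
          G ((σ, τ), ((P k).pts i.castSucc, (Q k).pts j.castSucc)) := by
      apply intervalIntegral.continuous_parametric_intervalIntegral_of_continuous'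
      exact hGcont.comp (by fun_prop)
    have hcont2 : Continuous fun σ : ℝ =>
        ∫ τ in ((Q k).pts j.castSucc)..((Q k).pts j.succ), G ((σ, τ), (σ, τ)) := by
      apply intervalIntegral.continuous_parametric_intervalIntegral_of_continuous'
      exact hGcont.comp (by fun_prop)
    have inner : ∀ σ : ℝ,
        (∫ τ in ((Q k).pts j.castSucc)..((Q k).pts j.succ),
            G ((σ, τ), ((P k).pts i.castSucc, (Q k).pts j.castSucc)))
          - (∫ τ in ((Q k).pts j.castSucc)..((Q k).pts j.succ), G ((σ, τ), (σ, τ)))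
        = ∫ τ in ((Q k).pts j.castSucc)..((Q k).pts j.succ),
            (G ((σ, τ), ((P k).pts i.castSucc, (Q k).pts j.castSucc))
              - G ((σ, τ), (σ, τ))) := fun σ =>
      (intervalIntegral.integral_sub
        ((hGcont.comp (by fun_prop)).intervalIntegrable _ _)
        ((hGcont.comp (by fun_prop)).intervalIntegrable _ _)).symm
    have hdiff : (∫ σ in ((P k).pts i.castSucc)..((P k).pts i.succ),
          ∫ τ in ((Q k).pts j.castSucc)..((Q k).pts j.succ),
            G ((σ, τ), ((P k).pts i.castSucc, (Q k).pts j.castSucc)))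
        - (∫ σ in ((P k).pts i.castSucc)..((P k).pts i.succ),
            ∫ τ in ((Q k).pts j.castSucc)..((Q k).pts j.succ), G ((σ, τ), (σ, τ)))
        = ∫ σ in ((P k).pts i.castSucc)..((P k).pts i.succ),
            ∫ τ in ((Q k).pts j.castSucc)..((Q k).pts j.succ),
              (G ((σ, τ), ((P k).pts i.castSucc, (Q k).pts j.castSucc))
                - G ((σ, τ), (σ, τ))) := by
      rw [← intervalIntegral.integral_sub (hcont1.intervalIntegrable _ _)
        (hcont2.intervalIntegrable _ _)]
      exact intervalIntegral.integral_congr fun σ _ => inner σ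
    rw [hdiff]
    have hboundpt : ∀ σ ∈ Icc ((P k).pts i.castSucc) ((P k).pts i.succ),
        ∀ τ ∈ Icc ((Q k).pts j.castSucc) ((Q k).pts j.succ),
        ‖G ((σ, τ), ((P k).pts i.castSucc, (Q k).pts j.castSucc))
            - G ((σ, τ), (σ, τ))‖ ≤ ε' := by
      intro σ hσ τ hτ
      have hσ' : σ ∈ Icc (0:ℝ) T :=
        ⟨le_trans (hmemP _).1 hσ.1, le_trans hσ.2 (hmemP _).2⟩
      have hτ' : τ ∈ Icc (0:ℝ) T :=
        ⟨le_trans (hmemQ _).1 hτ.1, le_trans hτ.2 (hmemQ _).2⟩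
      have hστ : ((σ, τ) : ℝ × ℝ) ∈ Sq T := mem_Sq.2 ⟨hσ', hτ'⟩
      have hac : (((P k).pts i.castSucc, (Q k).pts j.castSucc) : ℝ × ℝ) ∈ Sq T :=
        mem_Sq.2 ⟨hmemP _, hmemQ _⟩
      have hd1 : dist ((P k).pts i.castSucc) σ < δ := by
        rw [Real.dist_eq, abs_sub_comm, abs_of_nonneg (sub_nonneg.2 hσ.1)]
        calc σ - (P k).pts i.castSucc
            ≤ (P k).pts i.succ - (P k).pts i.castSucc := sub_le_sub_right hσ.2 _
          _ ≤ (P k).mesh := (P k).diff_le_mesh i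
          _ < δ := hmP
      have hd2 : dist ((Q k).pts j.castSucc) τ < δ := by
        rw [Real.dist_eq, abs_sub_comm, abs_of_nonneg (sub_nonneg.2 hτ.1)]
        calc τ - (Q k).pts j.castSucc
            ≤ (Q k).pts j.succ - (Q k).pts j.castSucc := sub_le_sub_right hτ.2 _
          _ ≤ (Q k).mesh := (Q k).diff_le_mesh j
          _ < δ := hmQ
      have hdist : dist ((((σ, τ) : ℝ × ℝ),
            (((P k).pts i.castSucc, (Q k).pts j.castSucc) : ℝ × ℝ)))
          ((((σ, τ) : ℝ × ℝ), ((σ, τ) : ℝ × ℝ))) < δ := by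
        rw [Prod.dist_eq]
        apply max_lt
        · rw [dist_self]; exact hδpos
        · rw [Prod.dist_eq]
          exact max_lt hd1 hd2
      have := hδ ((σ, τ), ((P k).pts i.castSucc, (Q k).pts j.castSucc))
        (Set.mem_prod.2 ⟨hστ, hac⟩) ((σ, τ), (σ, τ)) (Set.mem_prod.2 ⟨hστ, hστ⟩) hdist
      rw [dist_eq_norm] at this
      exact this.le
    have := normDoubleLe hab hcd hε'.le hboundpt
    calc ‖∫ σ in ((P k).pts i.castSucc)..((P k).pts i.succ),
            ∫ τ in ((Q k).pts j.castSucc)..((Q k).pts j.succ),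
              (G ((σ, τ), ((P k).pts i.castSucc, (Q k).pts j.castSucc))
                - G ((σ, τ), (σ, τ)))‖
        ≤ ((P k).pts i.succ - (P k).pts i.castSucc)
            * ((Q k).pts j.succ - (Q k).pts j.castSucc) * ε' := this
      _ = ((P k).pts i.succ - (P k).pts i.castSucc)
            * (((Q k).pts j.succ - (Q k).pts j.castSucc) * ε') := by ring
  -- put everything together
  rw [dist_eq_norm, hSeq, hLeq]
  simp only [← Finset.sum_sub_distrib]
  apply lt_of_le_of_lt (b := t.1 * (t.2 * ε'))
  · refine (norm_sum_le _ _).trans ?_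
    refine (Finset.sum_le_sum fun i _ =>
      (norm_sum_le _ _).trans (Finset.sum_le_sum fun j _ => cell i j)).trans ?_
    apply le_of_eq
    have h1 : ∑ i : Fin ((P k).n + 1),
        ((P k).pts i.succ - (P k).pts i.castSucc) = t.1 - 0 := (P k).sum_diff
    have h2 : ∑ j : Fin ((Q k).n + 1),
        ((Q k).pts j.succ - (Q k).pts j.castSucc) = t.2 - 0 := (Q k).sum_diff
    rw [sub_zero] at h1 h2
    calc ∑ i : Fin ((P k).n + 1), ∑ j : Fin ((Q k).n + 1),
          ((P k).pts i.succ - (P k).pts i.castSucc)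
            * (((Q k).pts j.succ - (Q k).pts j.castSucc) * ε')
        = ∑ i : Fin ((P k).n + 1),
            ((P k).pts i.succ - (P k).pts i.castSucc)
              * ∑ j : Fin ((Q k).n + 1),
                  (((Q k).pts j.succ - (Q k).pts j.castSucc) * ε') := by
          exact Finset.sum_congr rfl fun i _ => (Finset.mul_sum _ _ _).symm
      _ = (∑ i : Fin ((P k).n + 1), ((P k).pts i.succ - (P k).pts i.castSucc))
            * ∑ j : Fin ((Q k).n + 1),
                (((Q k).pts j.succ - (Q k).pts j.castSucc) * ε') := by
          rw [Finset.sum_mul]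
      _ = t.1 * (t.2 * ε') := by rw [← Finset.sum_mul, h1, h2]
  · -- t.1 * (t.2 * ε') < ε
    calc t.1 * (t.2 * ε') ≤ T * (T * ε') := by
          have h2 : t.2 * ε' ≤ T * ε' := mul_le_mul_of_nonneg_right ht2.2 hε'.le
          have h3 : (0:ℝ) ≤ t.2 * ε' := mul_nonneg ht2.1 hε'.le
          exact mul_le_mul ht1.2 h2 h3 hT0
      _ < ε := by
          rw [hε'def, show T * (T * (ε / (T * T + 1))) = ε * ((T * T) / (T * T + 1)) by ring]
          have hq : (T * T) / (T * T + 1) < 1 := (div_lt_one hden).2 (by linarith)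
          calc ε * ((T * T) / (T * T + 1)) < ε * 1 := by
                exact mul_lt_mul_of_pos_left hq hε
            _ = ε := mul_one ε


end Plane
end
end
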